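/- arXiv:1904.04157 — 3 statements merged into one kernel-verified Lean document; each statement's English description precedes it below -/
import Mathlib

section
/- Let 1 ≤ m ≤ n and let S be a matrix in the Gårding cone K_m(n). Then for every integer p with 2 ≤ p ≤ m, the strict inequality T_{p−1}(S)^{1/(p−1)} > T_p(S)^{1/p} holds. -/
/-!
The `p`-traces of a symmetric matrix are, up to sign, the coefficients of its characteristic
polynomial, which is real-rooted. Differentiating and reflecting preserve real-rootedness
(Rolle), and reduce a real-rooted polynomial of degree `k + 2 + l` to a real-rooted quadratic;
its discriminant gives Newton's inequality
`(k + 2)(l + 2) a_k a_{k+2} ≤ (k + 1)(l + 1) a_{k+1}²`.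
Since `(k + 1)(l + 1) < (k + 2)(l + 2)`, on the Gårding cone the sequence `T_p` is strictly
log-concave with `T_0 = 1`, and chaining these inequalities gives `T_p^(p-1) < T_(p-1)^p`.
-/

open Matrix

/-- The `p`-trace of a square real matrix: the sum of all `p × p` principal minors.
    `ptrace 0 S = 1`. -/
noncomputable def ptrace {ι : Type*} [Fintype ι] (p : ℕ) (S : Matrix ι ι ℝ) : ℝ := by
  classical
  exact ∑ t ∈ Finset.univ.powersetCard p,
    (S.submatrix (Subtype.val : {x // x ∈ t} → ι) Subtype.val).det

/-- The Gårding cone `K_m(n)`: real symmetric `n × n` matrices with `T_p > 0`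
    for `p = 1, …, m`. -/
noncomputable def gardingCone (n m : ℕ) : Set (Matrix (Fin n) (Fin n) ℝ) :=
  {S | S.IsSymm ∧ ∀ p, 1 ≤ p → p ≤ m → 0 < ptrace p S}

open Nat Polynomial

theorem Nat.cast_add_descFactorial (j k : ℕ) :
    ((j + k).descFactorial k : ℝ) = (j + k)! / j ! := by
  rw [eq_div_iff (by positivity), mul_comm]
  have := Nat.factorial_mul_descFactorial (Nat.le_add_left k j)
  rw [Nat.add_sub_cancel] at this
  exact_mod_cast this

namespace Polynomial

theorem Splits.derivative {f : ℝ[X]} (hf : f.Splits) : (Polynomial.derivative f).Splits := by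
  rcases Nat.eq_zero_or_pos f.natDegree with h0 | hpos
  · simp [derivative_of_natDegree_zero h0]
  rw [splits_iff_card_roots] at hf ⊢
  have hrolle := card_roots_le_derivative f
  have hroots := card_roots' (Polynomial.derivative f)
  have hdeg := natDegree_derivative_lt (p := f) hpos.ne'
  omega

theorem Splits.iterate_derivative {f : ℝ[X]} (hf : f.Splits) (k : ℕ) :
    (Polynomial.derivative^[k] f).Splits := by
  induction k with
  | zero => exact hf
  | succ k ih => rw [Function.iterate_succ_apply']; exact ih.derivative

theorem Splits.reverse {K : Type*} [Field K] {f : K[X]} (hf : f.Splits) : f.reverse.Splits := by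
  induction hf using Submonoid.closure_induction with
  | mem g hg =>
    obtain ⟨a, rfl⟩ | ⟨a, rfl⟩ := hg
    · simp
    · refine Splits.of_natDegree_le_one ((reverse_natDegree_le _).trans ?_)
      exact (natDegree_add_C).le.trans natDegree_X_le
  | one => rw [← C_1, reverse_C]; exact Splits.C 1
  | mul g h _ _ hg hh => rw [reverse_mul_of_domain]; exact hg.mul hh

theorem Splits.reflect {K : Type*} [Field K] {f : K[X]} (hf : f.Splits) {N : ℕ}
    (hN : f.natDegree ≤ N) : (f.reflect N).Splits := by
  have h := reflect_mul f 1 le_rfl (natDegree_one.trans_le (Nat.zero_le (N - f.natDegree)))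
  rw [mul_one, Nat.add_sub_cancel' hN, reflect_one] at h
  rw [h]
  exact hf.reverse.mul (Splits.X_pow _)

theorem Splits.four_mul_coeff_two_mul_coeff_zero_le {K : Type*} [Field K] [LinearOrder K]
    [IsStrictOrderedRing K] {q : K[X]} (hq : q.Splits) (hdeg : q.natDegree ≤ 2) :
    4 * q.coeff 2 * q.coeff 0 ≤ q.coeff 1 ^ 2 := by
  rcases eq_or_ne (q.coeff 2) 0 with h2 | h2
  · rw [h2, mul_zero, zero_mul]; positivity
  have hdeg2 : q.natDegree = 2 := hdeg.antisymm (le_natDegree_of_ne_zero h2)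
  have hq0 : q ≠ 0 := by rintro rfl; simp at h2
  obtain ⟨x, hx⟩ := hq.exists_eval_eq_zero (by rw [degree_eq_natDegree hq0, hdeg2]; decide)
  rw [eval_eq_sum_range' (show q.natDegree < 3 by omega), Finset.sum_range_succ,
    Finset.sum_range_succ, Finset.sum_range_one] at hx
  have := discrim_eq_sq_of_quadratic_eq_zero (a := q.coeff 2) (b := q.coeff 1) (c := q.coeff 0)
    (x := x) (by linear_combination hx)
  rw [discrim] at this
  nlinarith [sq_nonneg (2 * q.coeff 2 * x + q.coeff 1)]

theorem coeff_iterate_derivative_reflect_iterate_derivative (f : ℝ[X]) {j k l : ℕ}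
    (hj : j ≤ 2) :
    (Polynomial.derivative^[l] ((Polynomial.derivative^[k] f).reflect (l + 2))).coeff j
      = (j + l)! / j ! * ((2 - j + k)! / (2 - j)! * f.coeff (2 - j + k)) := by
  rw [coeff_iterate_derivative, coeff_reflect, revAt_le (by omega), coeff_iterate_derivative,
    nsmul_eq_mul, nsmul_eq_mul, Nat.cast_add_descFactorial, Nat.cast_add_descFactorial,
    show l + 2 - (j + l) = 2 - j by omega]

theorem Splits.newton_coeff {f : ℝ[X]} (hf : f.Splits) {k l : ℕ}
    (hdeg : f.natDegree ≤ k + 2 + l) :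
    ((k + 2) * (l + 2) : ℝ) * (f.coeff k * f.coeff (k + 2))
      ≤ ((k + 1) * (l + 1) : ℝ) * f.coeff (k + 1) ^ 2 := by
  set q := Polynomial.derivative^[l] ((Polynomial.derivative^[k] f).reflect (l + 2))
  have hg : (Polynomial.derivative^[k] f).natDegree ≤ l + 2 :=
    (natDegree_iterate_derivative f k).trans (by omega)
  have hq : q.Splits := ((hf.iterate_derivative k).reflect hg).iterate_derivative l
  have hqdeg : q.natDegree ≤ 2 := by
    have hreflect := natDegree_reflect_le (N := l + 2) (p := Polynomial.derivative^[k] f)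
    exact (natDegree_iterate_derivative _ l).trans (by omega)
  -- `q` is a real-rooted quadratic whose coefficients are `f.coeff k`, `f.coeff (k + 1)`,
  -- `f.coeff (k + 2)` up to factorials.
  have disc := hq.four_mul_coeff_two_mul_coeff_zero_le hqdeg
  rw [coeff_iterate_derivative_reflect_iterate_derivative f le_rfl,
    coeff_iterate_derivative_reflect_iterate_derivative f zero_le_two,
    coeff_iterate_derivative_reflect_iterate_derivative f one_le_two] at disc
  norm_num [Nat.factorial_succ, add_comm _ l, add_comm _ k] at disc
  have hP : (0 : ℝ) < (l ! * k !) ^ 2 * ((l + 1) * (k + 1)) := by positivity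
  refine le_of_mul_le_mul_left ?_ hP
  linear_combination disc

end Polynomial

section MaclaurinChain

variable {e : ℕ → ℝ} {m : ℕ}

theorem pow_add_one_lt_pow_add_two_of_pow_le_of_mul_lt_sq {a b c : ℝ} {k : ℕ} (ha : 0 ≤ a)
    (hb : 0 < b) (hc : 0 ≤ c) (hab : b ^ k ≤ a ^ (k + 1)) (habc : a * c < b ^ 2) :
    c ^ (k + 1) < b ^ (k + 2) := by
  refine lt_of_mul_lt_mul_left ?_ (pow_nonneg hb.le k)
  calc b ^ k * c ^ (k + 1) ≤ a ^ (k + 1) * c ^ (k + 1) := by gcongr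
    _ = (a * c) ^ (k + 1) := (mul_pow a c _).symm
    _ < (b ^ 2) ^ (k + 1) := by gcongr
    _ = b ^ k * b ^ (k + 2) := by ring

theorem pow_add_one_le_pow_of_mul_lt_sq (h0 : e 0 = 1) (hpos : ∀ k ≤ m, 0 < e k)
    (hlc : ∀ k, k + 2 ≤ m → e k * e (k + 2) < e (k + 1) ^ 2) :
    ∀ k, k + 1 ≤ m → e (k + 1) ^ k ≤ e k ^ (k + 1)
  | 0, _ => by simp [h0]
  | k + 1, hk =>
    (pow_add_one_lt_pow_add_two_of_pow_le_of_mul_lt_sq (hpos k (by omega)).le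
      (hpos (k + 1) (by omega)) (hpos (k + 2) hk).le
      (pow_add_one_le_pow_of_mul_lt_sq h0 hpos hlc k (by omega))
      (hlc k hk)).le

theorem pow_add_one_lt_pow_add_two_of_mul_lt_sq (h0 : e 0 = 1) (hpos : ∀ k ≤ m, 0 < e k)
    (hlc : ∀ k, k + 2 ≤ m → e k * e (k + 2) < e (k + 1) ^ 2) {k : ℕ} (hk : k + 2 ≤ m) :
    e (k + 2) ^ (k + 1) < e (k + 1) ^ (k + 2) :=
  pow_add_one_lt_pow_add_two_of_pow_le_of_mul_lt_sq (hpos k (by omega)).le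
    (hpos (k + 1) (by omega)) (hpos (k + 2) hk).le
    (pow_add_one_le_pow_of_mul_lt_sq h0 hpos hlc k (by omega)) (hlc k hk)

end MaclaurinChain

theorem Real.rpow_one_div_lt_rpow_one_div_of_pow_lt {x y : ℝ} {a b : ℕ} (hx : 0 ≤ x)
    (hy : 0 ≤ y) (ha : 0 < a) (hb : 0 < b) (h : x ^ b < y ^ a) :
    x ^ ((1 : ℝ) / a) < y ^ ((1 : ℝ) / b) := by
  have hroot {z : ℝ} (hz : 0 ≤ z) (c d : ℕ) (hd : 0 < d) :
      z ^ ((1 : ℝ) / c) = (z ^ d) ^ ((1 : ℝ) / (c * d)) := by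
    rw [← Real.rpow_natCast, ← Real.rpow_mul hz]
    field_simp
  rw [hroot hx a b hb, hroot hy b a ha, mul_comm (b : ℝ)]
  exact Real.rpow_lt_rpow (by positivity) h (by positivity)

namespace Matrix

@[simp]
theorem ptrace_zero {ι : Type*} [Fintype ι] (S : Matrix ι ι ℝ) : ptrace 0 S = 1 := by
  simp [ptrace]

variable {ι : Type*} [Fintype ι] [DecidableEq ι] {S : Matrix ι ι ℝ}

theorem charpoly_coeff_card_sub_eq_ptrace (S : Matrix ι ι ℝ) {p : ℕ}
    (hp : p ≤ Fintype.card ι) :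
    S.charpoly.coeff (Fintype.card ι - p) = (-1) ^ p * ptrace p S := by
  rw [charpoly_coeff_eq_sum_minors S p hp, ptrace]
  congr!

theorem IsSymm.newton_ptrace (hS : S.IsSymm) {k l : ℕ} (hcard : Fintype.card ι = k + 2 + l) :
    ((k + 2) * (l + 2) : ℝ) * (ptrace k S * ptrace (k + 2) S)
      ≤ ((k + 1) * (l + 1) : ℝ) * ptrace (k + 1) S ^ 2 := by
  have hsplits := (isHermitian_iff_isSymm.mpr hS).splits_charpoly
  have hnewton := hsplits.newton_coeff (k := l) (l := k)
    (by rw [charpoly_natDegree_eq_dim, hcard]; omega)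
  have coeff (p i : ℕ) (h : p + i = k + 2 + l) :
      S.charpoly.coeff i = (-1) ^ p * ptrace p S := by
    rw [← charpoly_coeff_card_sub_eq_ptrace S (by omega), hcard]
    congr 1
    omega
  rw [coeff (k + 2) l (by omega), coeff (k + 1) (l + 1) (by omega), coeff k (l + 2) (by omega),
    pow_add (-1 : ℝ) k 2, pow_succ (-1 : ℝ) k] at hnewton
  have hsign : ((-1 : ℝ) ^ k) ^ 2 = 1 := by rw [← pow_mul, pow_mul', neg_one_sq, one_pow]
  linear_combination hnewton - ((k + 2) * (l + 2) * (ptrace k S * ptrace (k + 2) S)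
    - (k + 1) * (l + 1) * ptrace (k + 1) S ^ 2) * hsign

theorem IsSymm.ptrace_mul_ptrace_lt_sq (hS : S.IsSymm) {k : ℕ} (hk : k + 2 ≤ Fintype.card ι)
    (hne : ptrace (k + 1) S ≠ 0) :
    ptrace k S * ptrace (k + 2) S < ptrace (k + 1) S ^ 2 := by
  obtain ⟨l, hl⟩ := Nat.exists_eq_add_of_le hk
  have hnewton := hS.newton_ptrace hl
  by_contra! h
  have := mul_le_mul_of_nonneg_left h (by positivity : (0 : ℝ) ≤ (k + 2) * (l + 2))
  nlinarith [mul_pos (by positivity : (0 : ℝ) < k + l + 3) (sq_pos_of_ne_zero hne)]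

end Matrix

theorem maclaurin_strict_on_gardingCone_general (n m : ℕ) (h2 : m ≤ n)
    (S : Matrix (Fin n) (Fin n) ℝ) (hS : S ∈ gardingCone n m)
    (p : ℕ) (hp : 2 ≤ p) (hpm : p ≤ m) :
    (ptrace p S) ^ ((1 : ℝ) / p) < (ptrace (p - 1) S) ^ ((1 : ℝ) / (p - 1 : ℕ)) := by
  obtain ⟨hsymm, hpos⟩ := hS
  have hT : ∀ k ≤ m, 0 < ptrace k S
    | 0, _ => by simp
    | k + 1, hk => hpos _ k.succ_pos hk
  have hlc : ∀ k, k + 2 ≤ m → ptrace k S * ptrace (k + 2) S < ptrace (k + 1) S ^ 2 :=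
    fun k hk => hsymm.ptrace_mul_ptrace_lt_sq (by rw [Fintype.card_fin]; omega)
      (hT _ (by omega)).ne'
  obtain ⟨k, rfl⟩ := Nat.exists_eq_add_of_le' hp
  refine Real.rpow_one_div_lt_rpow_one_div_of_pow_lt (hT _ hpm).le (hT _ (by omega)).le
    (by omega) (by omega) ?_
  simpa using pow_add_one_lt_pow_add_two_of_mul_lt_sq (Matrix.ptrace_zero S) hT hlc hpm

/-- For `S ∈ K_m(n)` and `2 ≤ p ≤ m`, the strict Maclaurin-type inequality
`T_{p-1}(S)^(1/(p-1)) > T_p(S)^(1/p)` holds. -/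
theorem maclaurin_strict_on_gardingCone (n m : ℕ) (h1 : 1 ≤ m) (h2 : m ≤ n)
    (S : Matrix (Fin n) (Fin n) ℝ) (hS : S ∈ gardingCone n m)
    (p : ℕ) (hp : 2 ≤ p) (hpm : p ≤ m) :
    (ptrace p S) ^ ((1 : ℝ) / p) < (ptrace (p - 1) S) ^ ((1 : ℝ) / (p - 1 : ℕ)) :=
  maclaurin_strict_on_gardingCone_general n m h2 S hS p hp hpm
end

section
/- For every 1 ≤ m ≤ n, every real symmetric n×n matrix S, and every vector ξ ∈ ℝⁿ, the identity T_m(S + ξ ξᵀ) = T_m(S) + Σ_{i,j} T_m^{ij}(S) ξ_i ξ_j holds, where ξ ξᵀ is the rank-one outer product matrix and T_m^{ij}(S) = ∂T_m(S)/∂s_{ij} is the partial derivative of T_m with respect to the (i,j)-th matrix entry. -/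
/-!
By the matrix determinant lemma `det (A + u vᵀ) = det A + vᵀ adj(A) u`, applied to every principal
submatrix, `T_p(S + u vᵀ) = T_p(S) + B(u, v)` for a bilinear form `B` built from the adjugates of
the principal submatrices of `S`. Taking `u vᵀ = s eᵢ eⱼᵀ` shows that `T_p` is affine in the
`(i, j)`-th entry with slope `B(eᵢ, eⱼ)`, so `T_p^{ij}(S) = B(eᵢ, eⱼ)`, and `B(ξ, ξ)` expands by
bilinearity into `Σ_{i,j} T_p^{ij}(S) ξᵢ ξⱼ`.
-/

open Matrix

/-- `T_m^{ij}(S)`: the partial derivative of `T_m` with respect to the `(i,j)`-th matrix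
entry, evaluated at `S`. -/
noncomputable def Tmij (n m : ℕ) (S : Matrix (Fin n) (Fin n) ℝ) (i j : Fin n) : ℝ :=
  deriv (fun t : ℝ => ptrace m (S + t • Matrix.single i j 1)) 0

open Polynomial

section DeterminantLemma

variable {R S : Type*} [CommRing R] [CommRing S] {n : Type*}

theorem Matrix.map_vecMulVec (f : R →+* S) (u v : n → R) :
    (vecMulVec u v).map f = vecMulVec (f ∘ u) (f ∘ v) := by
  ext i j
  simp [vecMulVec]

variable [Fintype n] [DecidableEq n]

theorem RingHom.map_det_add_vecMulVec (f : R →+* S) (A : Matrix n n R) (u v : n → R) :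
    f (A + vecMulVec u v).det = (A.map f + vecMulVec (f ∘ u) (f ∘ v)).det := by
  rw [RingHom.map_det, map_add, RingHom.mapMatrix_apply, RingHom.mapMatrix_apply,
    Matrix.map_vecMulVec]

theorem RingHom.map_dotProduct_adjugate_mulVec (f : R →+* S) (A : Matrix n n R) (u v : n → R) :
    f (v ⬝ᵥ A.adjugate *ᵥ u) = (f ∘ v) ⬝ᵥ (A.map f).adjugate *ᵥ (f ∘ u) := by
  rw [RingHom.map_dotProduct, ← RingHom.mapMatrix_apply, ← RingHom.map_adjugate]
  congr 1
  funext i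
  exact RingHom.map_mulVec f _ u i

theorem Matrix.det_add_vecMulVec_of_isUnit {A : Matrix n n R} (hA : IsUnit A.det) (u v : n → R) :
    (A + vecMulVec u v).det = A.det + v ⬝ᵥ A.adjugate *ᵥ u := by
  rw [vecMulVec_eq Unit, det_add_replicateCol_mul_replicateRow hA,
    det_unique (1 + _ : Matrix Unit Unit R), add_apply, one_apply_eq, ← replicateRow_vecMul,
    replicateRow_mul_replicateCol_apply, ← dotProduct_mulVec, inv_def, smul_mulVec,
    dotProduct_smul, smul_eq_mul, mul_add, mul_one, ← mul_assoc, Ring.mul_inverse_cancel _ hA,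
    one_mul]

/- Reduction to the invertible case: over `R[X]` the matrix `charmatrix (-A) = X • 1 + A` has
monic determinant, so `R[X]` embeds into the localization away from that determinant, where it
becomes a unit; evaluating at `X = 0` then recovers `A`. -/
theorem Matrix.det_add_vecMulVec (A : Matrix n n R) (u v : n → R) :
    (A + vecMulVec u v).det = A.det + v ⬝ᵥ A.adjugate *ᵥ u := by
  let L := Localization.Away (-A).charpoly
  have hinj : Function.Injective (algebraMap R[X] L) := IsLocalization.injective L
    (Submonoid.powers_le.2 (charpoly_monic (-A)).mem_nonZeroDivisors)
  have hunit : IsUnit ((charmatrix (-A)).map (algebraMap R[X] L)).det := by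
    rw [← RingHom.mapMatrix_apply, ← RingHom.map_det]
    exact IsLocalization.Away.algebraMap_isUnit (-A).charpoly
  have hlift : (charmatrix (-A) + vecMulVec (C ∘ u) (C ∘ v)).det =
      (charmatrix (-A)).det + (C ∘ v) ⬝ᵥ (charmatrix (-A)).adjugate *ᵥ (C ∘ u) := by
    apply hinj
    rw [RingHom.map_det_add_vecMulVec, map_add, RingHom.map_dotProduct_adjugate_mulVec,
      RingHom.map_det]
    exact det_add_vecMulVec_of_isUnit hunit _ _
  have heval : (charmatrix (-A)).map (evalRingHom 0) = A := by
    ext i j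
    by_cases h : i = j <;> simp [h]
  have hevalC (w : n → R) : evalRingHom 0 ∘ C ∘ w = w := by
    funext i
    simp
  have := congrArg (evalRingHom 0) hlift
  rwa [RingHom.map_det_add_vecMulVec, map_add, RingHom.map_dotProduct_adjugate_mulVec,
    RingHom.map_det, RingHom.mapMatrix_apply, heval, hevalC, hevalC] at this

end DeterminantLemma

section PTrace

variable {ι : Type*} [Fintype ι]

noncomputable def ptraceDerivForm (p : ℕ) (S : Matrix ι ι ℝ) :
    (ι → ℝ) →ₗ[ℝ] (ι → ℝ) →ₗ[ℝ] ℝ := by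
  classical
  exact (∑ t ∈ Finset.univ.powersetCard p,
    (toLinearMap₂' ℝ (S.submatrix (Subtype.val : {x // x ∈ t} → ι) Subtype.val).adjugate).compl₁₂
      (LinearMap.funLeft ℝ ℝ Subtype.val) (LinearMap.funLeft ℝ ℝ Subtype.val)).flip

theorem ptrace_add_vecMulVec (p : ℕ) (S : Matrix ι ι ℝ) (u v : ι → ℝ) :
    ptrace p (S + vecMulVec u v) = ptrace p S + ptraceDerivForm p S u v := by
  simp only [ptrace, ptraceDerivForm, LinearMap.flip_apply, LinearMap.sum_apply,
    LinearMap.compl₁₂_apply, toLinearMap₂'_apply', ← Finset.sum_add_distrib]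
  refine Finset.sum_congr rfl fun t _ => ?_
  classical
  exact det_add_vecMulVec _ _ _

theorem ptrace_add_smul_single [DecidableEq ι] (p : ℕ) (S : Matrix ι ι ℝ) (i j : ι) (s : ℝ) :
    ptrace p (S + s • single i j 1) =
      ptrace p S + s * ptraceDerivForm p S (Pi.single i 1) (Pi.single j 1) := by
  rw [single_eq_single_vecMulVec_single, ← smul_vecMulVec, ptrace_add_vecMulVec,
    LinearMap.map_smul₂, smul_eq_mul]

end PTrace

theorem Tmij_eq_ptraceDerivForm (n m : ℕ) (S : Matrix (Fin n) (Fin n) ℝ) (i j : Fin n) :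
    Tmij n m S i j = ptraceDerivForm m S (Pi.single i 1) (Pi.single j 1) := by
  simp only [Tmij, ptrace_add_smul_single]
  exact (((hasDerivAt_id 0).mul_const _).const_add _).deriv.trans (one_mul _)

theorem ptrace_add_rank_one_general (n m : ℕ)
    (S : Matrix (Fin n) (Fin n) ℝ) (ξ : Fin n → ℝ) :
    ptrace m (S + Matrix.vecMulVec ξ ξ)
      = ptrace m S + ∑ i, ∑ j, Tmij n m S i j * ξ i * ξ j := by
  rw [ptrace_add_vecMulVec, ← toLinearMap₂'_toMatrix' (R := ℝ) (ptraceDerivForm m S),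
    toLinearMap₂'_apply]
  simp only [Tmij_eq_ptraceDerivForm, smul_eq_mul, LinearMap.toMatrix₂'_apply]
  congr 1
  exact Finset.sum_congr rfl fun i _ => Finset.sum_congr rfl fun j _ => by ring

/-- For every real symmetric `n × n` matrix `S`, every `1 ≤ m ≤ n` and every
vector `ξ ∈ ℝⁿ`: `T_m(S + ξξᵀ) = T_m(S) + Σ_{i,j} T_m^{ij}(S) ξ_i ξ_j`. -/
theorem ptrace_add_rank_one (n m : ℕ) (h1 : 1 ≤ m) (h2 : m ≤ n)
    (S : Matrix (Fin n) (Fin n) ℝ) (hS : S.IsSymm) (ξ : Fin n → ℝ) :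
    ptrace m (S + Matrix.vecMulVec ξ ξ)
      = ptrace m S + ∑ i, ∑ j, Tmij n m S i j * ξ i * ξ j :=
  ptrace_add_rank_one_general n m S ξ
end

section
/- If S is a real symmetric n×n matrix belonging to the Gårding cone K_m(n) for some 1 ≤ m ≤ n, then S has at least m strictly positive eigenvalues, counted with multiplicity. -/
open Matrix

/-!
The `p`-trace of `S` is, up to sign, a coefficient of its characteristic polynomial, hence equals
the elementary symmetric function `e_p` of the eigenvalues. If `e_1, …, e_m` of a multiset are
positive and `a ≤ 0` belongs to it, then `e_{p+1}(a ::ₘ t) = e_{p+1}(t) + a e_p(t)` shows by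
induction on `p` that `e_0, …, e_m` of the rest `t` stay positive. Removing every nonpositive
element thus leaves the positive ones with `e_m > 0`, so there are at least `m` of them.
-/

namespace Multiset

variable {R : Type*}

theorem esymm_cons_succ [CommSemiring R] (a : R) (s : Multiset R) (p : ℕ) :
    (a ::ₘ s).esymm (p + 1) = s.esymm (p + 1) + a * s.esymm p := by
  simp only [esymm, powersetCard_cons, map_add, sum_add, map_map, Function.comp_def, prod_cons,
    sum_map_mul_left]

theorem esymm_eq_zero_of_card_lt [CommSemiring R] {s : Multiset R} {p : ℕ} (h : card s < p) :
    s.esymm p = 0 := by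
  simp [esymm, powersetCard_eq_empty _ h]

variable [CommRing R] [LinearOrder R] [IsStrictOrderedRing R]

theorem esymm_pos_of_esymm_cons_pos {a : R} (ha : a ≤ 0) {s : Multiset R} {m : ℕ}
    (h : ∀ p, 1 ≤ p → p ≤ m → 0 < (a ::ₘ s).esymm p) : ∀ p ≤ m, 0 < s.esymm p := by
  intro p hp
  induction p with
  | zero => simp [esymm]
  | succ q ih =>
    have hcons := h (q + 1) q.succ_pos hp
    rw [esymm_cons_succ] at hcons
    nlinarith [ih (by omega)]

theorem le_card_of_esymm_add_pos {N : Multiset R} (hN : ∀ x ∈ N, x ≤ 0) (P : Multiset R)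
    {m : ℕ} (h : ∀ p, 1 ≤ p → p ≤ m → 0 < (N + P).esymm p) : m ≤ card P := by
  induction N using Multiset.induction_on with
  | empty =>
    by_contra! hlt
    have hm : 1 ≤ m := by omega
    exact (h m hm le_rfl).ne' (esymm_eq_zero_of_card_lt (by simpa using hlt))
  | cons a N ih =>
    refine ih (fun x hx => hN x (mem_cons_of_mem hx)) fun p hp hpm => ?_
    exact esymm_pos_of_esymm_cons_pos (hN a (mem_cons_self a N)) (by simpa using h) p hpm

theorem le_card_filter_pos_of_esymm_pos (s : Multiset R) {m : ℕ}
    (h : ∀ p, 1 ≤ p → p ≤ m → 0 < s.esymm p) : m ≤ card (s.filter (0 < ·)) := by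
  refine le_card_of_esymm_add_pos (N := s.filter (¬ 0 < ·)) (by simp) _ fun p hp hpm => ?_
  rw [add_comm, filter_add_not]
  exact h p hp hpm

end Multiset

open Polynomial in
theorem ptrace_eq_esymm_of_charpoly_eq_prod {ι : Type*} [Fintype ι] [DecidableEq ι]
    {S : Matrix ι ι ℝ} {μ : ι → ℝ} (hμ : S.charpoly = ∏ i, (X - C (μ i))) (p : ℕ) :
    ptrace p S = (Finset.univ.val.map μ).esymm p := by
  have hcard : Multiset.card (Finset.univ.val.map μ) = Fintype.card ι := by simp
  rcases le_or_gt p (Fintype.card ι) with hp | hp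
  · have hcoeff := S.charpoly_coeff_eq_sum_minors p hp
    have hprod : ∏ i, (X - C (μ i)) = ((Finset.univ.val.map μ).map fun t => X - C t).prod := by
      rw [Multiset.map_map]; rfl
    rw [hμ, hprod, Multiset.prod_X_sub_C_coeff _ (by omega), hcard, Nat.sub_sub_self hp] at hcoeff
    rw [mul_left_cancel₀ (pow_ne_zero p (neg_ne_zero.2 one_ne_zero)) hcoeff, ptrace]
    convert rfl
  · rw [Multiset.esymm_eq_zero_of_card_lt (by omega), ptrace]
    simp [Finset.powersetCard_eq_empty.2 (hp.trans_eq' Finset.card_univ)]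

theorem Matrix.IsHermitian.ptrace_eq_esymm_eigenvalues {ι : Type*} [Fintype ι] [DecidableEq ι]
    {S : Matrix ι ι ℝ} (hS : S.IsHermitian) (p : ℕ) :
    ptrace p S = (Finset.univ.val.map hS.eigenvalues).esymm p :=
  ptrace_eq_esymm_of_charpoly_eq_prod (by simpa using hS.charpoly_eq) p

theorem gardingCone_pos_eigenvalues_general (n m : ℕ)
    (S : Matrix (Fin n) (Fin n) ℝ) (hS : S.IsHermitian) (hK : S ∈ gardingCone n m) :
    m ≤ (Finset.univ.filter fun i => 0 < hS.eigenvalues i).card := by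
  have h := (Finset.univ.val.map hS.eigenvalues).le_card_filter_pos_of_esymm_pos fun p hp hpm =>
    hS.ptrace_eq_esymm_eigenvalues p ▸ hK.2 p hp hpm
  rwa [Multiset.filter_map, Multiset.card_map] at h

/-- a real symmetric `n × n` matrix in `K_m(n)` (for some `1 ≤ m ≤ n`) has at
least `m` strictly positive eigenvalues, counted with multiplicity. -/
theorem gardingCone_pos_eigenvalues (n m : ℕ) (h1 : 1 ≤ m) (h2 : m ≤ n)
    (S : Matrix (Fin n) (Fin n) ℝ) (hS : S.IsHermitian) (hK : S ∈ gardingCone n m) :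
    m ≤ (Finset.univ.filter fun i => 0 < hS.eigenvalues i).card :=
  gardingCone_pos_eigenvalues_general n m S hS hK
end
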